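/- Let H be a real Hilbert space, f : H → ℝ ∪ {+∞} a proper lower semicontinuous function and x̄ ∈ dom f. If x̄ is a strict local minimizer of order two for f, then 0 ∈ ∂_p f(x̄) and there exists β > 0 such that f''₋(x̄, 0, h) ≥ β for every unit vector h ∈ H (i.e., f satisfies the second-order optimality condition of the first kind at x̄). -/

import Mathlib

/-! Quadratic growth `f x₀ + (β/2)‖x - x₀‖² ≤ f x` near `x₀` gives `0 ∈ ∂_p f(x₀)` with `σ = β`, and
at `x = x₀ + t • u` it reads `β‖u‖² ≤ Δ₂f(x₀,0,t,u)` as soon as `t‖u‖` is small. Since `t • u → 0`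
as `(t,u) → (0⁺,h)`, this bound holds eventually, and taking the liminf gives
`f''₋(x₀,0,h) ≥ β‖h‖² = β` for unit `h`. -/

open Filter Topology Set Pointwise

noncomputable section

variable {H : Type*} [NormedAddCommGroup H] [InnerProductSpace ℝ H] [CompleteSpace H]

/-- The proximal subdifferential of `f` at `x`. -/
def proxSubdiff (f : H → EReal) (x : H) : Set H :=
  {ζ | ∃ σ > (0:ℝ), ∃ δ > (0:ℝ), ∀ y ∈ Metric.ball x δ,
    f x + (((inner ℝ ζ (y - x) : ℝ) - σ / 2 * ‖y - x‖ ^ 2 : ℝ) : EReal) ≤ f y}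

/-- The second-order difference quotient `Δ₂f(x₀,p,t,u)`. -/
def Delta2 (f : H → EReal) (x₀ p : H) (t : ℝ) (u : H) : EReal :=
  ((2 / t ^ 2 : ℝ) : EReal) * (f (x₀ + t • u) - f x₀ - ((t * (inner ℝ p u : ℝ) : ℝ) : EReal))

/-- The second-order lower Dini-directional derivative `f''₋(x₀,p,h)`. -/
def secondDini (f : H → EReal) (x₀ p h : H) : EReal :=
  Filter.liminf (fun q : ℝ × H => Delta2 f x₀ p q.1 q.2)
    ((nhdsWithin (0:ℝ) (Set.Ioi 0)) ×ˢ (nhds h))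

/-- Weak sequential convergence in a Hilbert space. -/
def WeakTendsto (u : ℕ → H) (x : H) : Prop :=
  ∀ w : H, Tendsto (fun n => (inner ℝ (u n) w : ℝ)) atTop (nhds (inner ℝ x w : ℝ))

/-- The mixed contingent cone `T_M(gph ∂_p f, (x₀,p))`. -/
def mixedTangent (f : H → EReal) (x₀ p : H) : Set (H × H) :=
  {q | ∃ (t : ℕ → ℝ) (hn zn : ℕ → H),
    (∀ n, 0 < t n) ∧ Tendsto t atTop (nhds 0) ∧
    Tendsto hn atTop (nhds q.1) ∧ WeakTendsto zn q.2 ∧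
    ∀ n, p + t n • zn n ∈ proxSubdiff f (x₀ + t n • hn n)}

/-- The second-order mixed graphical derivative `D²_M f(x₀,p)(h)`. -/
def D2M (f : H → EReal) (x₀ p : H) (h : H) : Set H := {z | (h, z) ∈ mixedTangent f x₀ p}

/-- Dual cone of a subset of `H × H`. -/
def dualConePair (S : Set (H × H)) : Set (H × H) :=
  {q | ∀ w ∈ S, (inner ℝ q.1 w.1 : ℝ) + (inner ℝ q.2 w.2 : ℝ) ≤ 0}

/-- `N_M(gph ∂_p f, (x₀,p))`, the dual cone of the mixed contingent cone. -/
def NM (f : H → EReal) (x₀ p : H) : Set (H × H) := dualConePair (mixedTangent f x₀ p)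

/-- The second-order mixed proximal subdifferential `∂²_M f(x₀,p)(h)`. -/
def partial2M (f : H → EReal) (x₀ p : H) (h : H) : Set H := {z | (z, -h) ∈ NM f x₀ p}

/-- The limiting (Mordukhovich) subdifferential of `g` at `x`. -/
def limitSubdiff (g : H → EReal) (x : H) : Set H :=
  {ζ | ∃ (xn ζn : ℕ → H), Tendsto xn atTop (nhds x) ∧
    Tendsto (fun n => g (xn n)) atTop (nhds (g x)) ∧
    WeakTendsto ζn ζ ∧ ∀ n, ζn n ∈ proxSubdiff g (xn n)}

/-- Epigraph of an `EReal`-valued function, viewed inside `H × ℝ`. -/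
def epiE (g : H → EReal) : Set (H × ℝ) := {q | g q.1 ≤ (q.2 : EReal)}

/-- Weak convergence in `H × ℝ`: weak in `H`, usual in `ℝ`. -/
def WeakTendstoPair (u : ℕ → H × ℝ) (q : H × ℝ) : Prop :=
  WeakTendsto (fun n => (u n).1) q.1 ∧ Tendsto (fun n => (u n).2) atTop (nhds q.2)

/-- Mosco convergence of a sequence of subsets of `H × ℝ` to `L`. -/
def MoscoConv (C : ℕ → Set (H × ℝ)) (L : Set (H × ℝ)) : Prop :=
  (L = {q | ∃ u : ℕ → H × ℝ, (∀ n, u n ∈ C n) ∧ Tendsto u atTop (nhds q)}) ∧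
  (L = {q | ∃ (u : ℕ → H × ℝ) (φ : ℕ → ℕ), StrictMono φ ∧ (∀ n, u n ∈ C n) ∧
      WeakTendstoPair (fun n => u (φ n)) q})

/-- `f` is twice epi-differentiable at `x₀` relative to `p` in the sense of Mosco. -/
def TwiceEpiDiff (f : H → EReal) (x₀ p : H) : Prop :=
  ∃ g : H → EReal, (∀ x, g x ≠ ⊥) ∧ (∃ x, g x ≠ ⊤) ∧
    ∀ t : ℕ → ℝ, (∀ n, 0 < t n) → Tendsto t atTop (nhds 0) →
      MoscoConv (fun n => epiE (fun u => Delta2 f x₀ p (t n) u)) (epiE g)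

/-- Concavity on a set for `EReal`-valued functions. -/
def ConcaveOnE {E : Type*} [AddCommGroup E] [Module ℝ E] (s : Set E) (g : E → EReal) : Prop :=
  ∀ u ∈ s, ∀ v ∈ s, ∀ μ : ℝ, 0 ≤ μ → μ ≤ 1 →
    ((μ : ℝ) : EReal) * g u + ((1 - μ : ℝ) : EReal) * g v ≤ g (μ • u + (1 - μ) • v)

/-- `f` is paraconcave: `f - (1/(2λ))‖·‖²` is concave for some `λ > 0`. -/
def Paraconcave (f : H → EReal) : Prop :=
  ∃ lam > (0:ℝ), ConcaveOnE Set.univ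
    (fun x => f x - ((1 / (2 * lam) * ‖x‖ ^ 2 : ℝ) : EReal))

/-- The cone generated by `A - x`. -/
def coneGen {E : Type*} [AddCommGroup E] [Module ℝ E] (A : Set E) (x : E) : Set E :=
  {y | ∃ t : ℝ, 0 ≤ t ∧ ∃ a ∈ A, y = t • (a - x)}

/-- Quasi-relative interior. -/
def qri {E : Type*} [NormedAddCommGroup E] [NormedSpace ℝ E] (A : Set E) : Set E :=
  {x ∈ A | ∃ S : Submodule ℝ E, closure (coneGen A x) = (S : Set E)}

/-- Strong quasi-relative interior. -/
def sqri {E : Type*} [NormedAddCommGroup E] [NormedSpace ℝ E] (A : Set E) : Set E :=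
  {x ∈ A | ∃ S : Submodule ℝ E, IsClosed (S : Set E) ∧ coneGen A x = (S : Set E)}

/-- Second-order optimality condition of the first kind at `x₀`. -/
def SOC1 (f : H → EReal) (x₀ : H) : Prop :=
  ∃ β > (0:ℝ), ∀ h : H, ‖h‖ = 1 → ((β : ℝ) : EReal) ≤ secondDini f x₀ 0 h

/-- Second-order optimality condition of the second kind at `x₀`. -/
def SOC2 (f : H → EReal) (x₀ : H) : Prop :=
  ∃ β > (0:ℝ), ∀ h : H, ‖h‖ = 1 → (D2M f x₀ 0 h).Nonempty →
    ∃ z ∈ D2M f x₀ 0 h, β ≤ (inner ℝ z h : ℝ)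

/-- Second-order optimality condition of the third kind at `x₀`. -/
def SOC3 (f : H → EReal) (x₀ : H) : Prop :=
  ∃ β > (0:ℝ), ∀ h : H, ‖h‖ = 1 → ∀ z ∈ partial2M f x₀ 0 h, β ≤ (inner ℝ z h : ℝ)

/-- `x₀` is a strict local minimizer of order two for `f`. -/
def StrictLocalMinOrder2 (f : H → EReal) (x₀ : H) : Prop :=
  ∃ β > (0:ℝ), ∃ δ > (0:ℝ), ∀ x ∈ Metric.ball x₀ δ,
    f x₀ + ((β / 2 * ‖x - x₀‖ ^ 2 : ℝ) : EReal) ≤ f x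

/-- `f''₋(x₀,p,h) ≥ β` holds uniformly with respect to `h ∈ A`. -/
def UniformDiniGE (f : H → EReal) (x₀ p : H) (β : ℝ) (A : Set H) : Prop :=
  ∀ ε > (0:ℝ), ∃ δ > (0:ℝ), ∀ t : ℝ, 0 < t → t < δ →
    ∀ h ∈ A + Metric.closedBall (0:H) δ, ((β - ε : ℝ) : EReal) ≤ Delta2 f x₀ p t h

section

variable {E : Type*} [NormedAddCommGroup E] [InnerProductSpace ℝ E] {f : E → EReal}

theorem le_Delta2_of_add_le {x₀ p u : E} {t β : ℝ} (ht : 0 < t) (hx₀ : f x₀ ≠ ⊥)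
    (hx₀' : f x₀ ≠ ⊤)
    (hgrowth : f x₀ + ((t * inner ℝ p u + β / 2 * ‖t • u‖ ^ 2 : ℝ) : EReal) ≤ f (x₀ + t • u)) :
    ((β * ‖u‖ ^ 2 : ℝ) : EReal) ≤ Delta2 f x₀ p t u := by
  lift f x₀ to ℝ using ⟨hx₀', hx₀⟩ with r hr
  rw [Delta2, ← hr]
  induction hy : f (x₀ + t • u) using EReal.rec with
  | bot =>
    rw [hy, ← EReal.coe_add, le_bot_iff] at hgrowth
    exact absurd hgrowth (EReal.coe_ne_bot _)
  | top =>
    rw [EReal.top_sub_coe, EReal.top_sub_coe, EReal.mul_top_of_pos (by exact_mod_cast by positivity)]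
    exact le_top
  | coe a =>
    rw [hy] at hgrowth
    norm_cast at hgrowth ⊢
    rw [norm_smul, Real.norm_of_nonneg ht.le] at hgrowth
    rw [div_mul_eq_mul_div, le_div_iff₀ (by positivity)]
    nlinarith

theorem StrictLocalMinOrder2.zero_mem_proxSubdiff {x₀ : E} (hmin : StrictLocalMinOrder2 f x₀) :
    (0 : E) ∈ proxSubdiff f x₀ := by
  obtain ⟨β, hβ, δ, hδ, hgrowth⟩ := hmin
  refine ⟨β, hβ, δ, hδ, fun y hy => le_trans ?_ (hgrowth y hy)⟩
  gcongr
  simp only [inner_zero_left, zero_sub]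
  have := sq_nonneg ‖y - x₀‖
  nlinarith

theorem le_secondDini_of_eventually_le {x₀ p h : E} {g : E → ℝ} (hg : ContinuousAt g h)
    (hle : ∀ᶠ q in 𝓝[>] (0 : ℝ) ×ˢ 𝓝 h, (g q.2 : EReal) ≤ Delta2 f x₀ p q.1 q.2) :
    (g h : EReal) ≤ secondDini f x₀ p h := by
  have hlim : Tendsto (fun q : ℝ × E => (g q.2 : EReal)) (𝓝[>] (0 : ℝ) ×ˢ 𝓝 h) (𝓝 (g h)) :=
    (continuous_coe_real_ereal.continuousAt.comp hg).tendsto.comp tendsto_snd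
  rw [← hlim.liminf_eq]
  exact liminf_le_liminf hle

theorem eventually_le_Delta2_of_quadratic_growth {x₀ : E} {β δ : ℝ} (hδ : 0 < δ) (hx₀ : f x₀ ≠ ⊥) (hx₀' : f x₀ ≠ ⊤)
    (hgrowth : ∀ x ∈ Metric.ball x₀ δ, f x₀ + ((β / 2 * ‖x - x₀‖ ^ 2 : ℝ) : EReal) ≤ f x) (h : E) :
    ∀ᶠ q in 𝓝[>] (0 : ℝ) ×ˢ 𝓝 h, ((β * ‖q.2‖ ^ 2 : ℝ) : EReal) ≤ Delta2 f x₀ 0 q.1 q.2 := by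
  have hsmall : Tendsto (fun q : ℝ × E => q.1 • q.2) (𝓝[>] (0 : ℝ) ×ˢ 𝓝 h) (𝓝 0) := by
    have hfst : Tendsto Prod.fst (𝓝[>] (0 : ℝ) ×ˢ 𝓝 h) (𝓝 0) :=
      tendsto_fst.mono_right nhdsWithin_le_nhds
    simpa using hfst.smul tendsto_snd
  filter_upwards [prod_mem_prod self_mem_nhdsWithin univ_mem,
    hsmall (Metric.ball_mem_nhds 0 hδ)] with q hq hu
  refine le_Delta2_of_add_le hq.1 hx₀ hx₀' ?_
  simpa using hgrowth (x₀ + q.1 • q.2) (by simpa using hu)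

end

theorem strict_local_min_implies_soc1_general (f : H → EReal) (hbot : ∀ x, f x ≠ ⊥)
    (x₀ : H) (hdom : f x₀ ≠ ⊤) :
    StrictLocalMinOrder2 f x₀ →
      (0:H) ∈ proxSubdiff f x₀ ∧
        ∃ β > (0:ℝ), ∀ h : H, ‖h‖ = 1 → ((β : ℝ) : EReal) ≤ secondDini f x₀ 0 h := by
  intro hmin
  refine ⟨hmin.zero_mem_proxSubdiff, ?_⟩
  obtain ⟨β, hβ, δ, hδ, hgrowth⟩ := hmin
  refine ⟨β, hβ, fun h hh => ?_⟩
  have hdini := le_secondDini_of_eventually_le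
    (by fun_prop : ContinuousAt (fun u => β * ‖u‖ ^ 2) h)
    (eventually_le_Delta2_of_quadratic_growth hδ (hbot x₀) hdom hgrowth h)
  simpa [hh] using hdini

theorem strict_local_min_implies_soc1 (f : H → EReal) (hlsc : LowerSemicontinuous f) (hbot : ∀ x, f x ≠ ⊥)
    (hproper : ∃ x, f x ≠ ⊤) (x₀ : H) (hdom : f x₀ ≠ ⊤) :
    StrictLocalMinOrder2 f x₀ →
      (0:H) ∈ proxSubdiff f x₀ ∧
        ∃ β > (0:ℝ), ∀ h : H, ‖h‖ = 1 → ((β : ℝ) : EReal) ≤ secondDini f x₀ 0 h :=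
  strict_local_min_implies_soc1_general f hbot x₀ hdom
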